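/- Let d ≥ 2 be an integer and 1 < b < (d+1)/(d−1) a real number, and let λ₀ be as below. Then for every k ∈ {1, …, d−1}, the closure of the image (f_{λ₀,1} ∘ f_{λ₀,k})(Arc(1, λ₀)) is contained in the open arc Arc(1, λ₀); in particular f_{λ₀,k}(λ₀) ∈ Arc(1, λ₀). -/

import Mathlib

open Complex

/-- The semigroup generator `f_{λ,k}(z) = λ·((z+b)/(bz+1))^k`. -/
noncomputable def fl (b : ℝ) (lam : ℂ) (k : ℕ) (z : ℂ) : ℂ :=
  lam * ((z + (b : ℂ)) / ((b : ℂ) * z + 1)) ^ k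

/-- The angle in `[0, 2π)` of the counterclockwise arc from `α` to `β` on the unit circle. -/
noncomputable def arcAngle (α β : ℂ) : ℝ :=
  if (β / α).arg < 0 then (β / α).arg + 2 * Real.pi else (β / α).arg

/-- The open counterclockwise circular arc from `α` to `β`. -/
def openArc (α β : ℂ) : Set ℂ :=
  {z | ∃ t : ℝ, 0 < t ∧ t < arcAngle α β ∧ z = α * Complex.exp (t * Complex.I)}

/-!
In the angle coordinate `z = e^{iθ}` the Möbius map `z ↦ (z+b)/(bz+1)` lifts to the strictly
decreasing map `g(θ) = 2 arctan(sin θ/(b + cos θ)) - θ` with `g(0) = 0`, so `f_{e^{iμ},k}` acts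
on angles as `θ ↦ μ + k g(θ)`.  The fixed point condition puts `ψ(θ₀) = θ₀ + d g(θ₀)` in `2πℤ`,
hence `ψ(θ₀) ≤ 0` since `g(θ₀) < 0`.  A negative value is impossible: `ψ'(0) = 1 + d(1-b)/(1+b)`
is positive exactly because `b < (d+1)/(d-1)`, so the intermediate value theorem would give a
zero of `ψ` in `(0, θ₀)`, contradicting the minimality of `θ₀`.  Thus `g(θ₀) = -θ₀/d`, and
monotonicity of `g` keeps `θ₀ + k g(t)` in `(0, θ₀]` for `t ∈ [0, θ₀]` and `k < d`, and in
`(0, θ₀)` once `t > 0`; applying this twice handles `f_{λ₀,1} ∘ f_{λ₀,k}` on the compact closed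
arc, which contains the closure of the image of the open one.
-/

open Set

lemma Complex.arg_eq_arctan_of_re_pos {w : ℂ} (hw : 0 < w.re) :
    arg w = Real.arctan (w.im / w.re) := by
  have h := abs_lt.1 (abs_arg_lt_pi_div_two_iff.2 (Or.inl hw))
  rw [← tan_arg, Real.arctan_tan h.1 h.2]

lemma Complex.exp_ofReal_mul_I_eq_one_iff {r : ℝ} :
    exp (r * I) = 1 ↔ ∃ n : ℤ, r = n * (2 * Real.pi) := by
  rw [← Circle.exp_eq_one, Circle.ext_iff, Circle.coe_exp, Circle.coe_one]

lemma eq_zero_of_forall_ne_zero_of_hasDerivAt_pos {ψ : ℝ → ℝ} {D θ₀ : ℝ}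
    (hψ : ContinuousOn ψ (Icc 0 θ₀)) (hψ0 : ψ 0 = 0) (hD : HasDerivAt ψ D 0) (hDpos : 0 < D)
    (hθ₀ : 0 < θ₀) (hle : ψ θ₀ ≤ 0) (hne : ∀ θ ∈ Ioo 0 θ₀, ψ θ ≠ 0) : ψ θ₀ = 0 := by
  by_contra hθ₀ne
  have hslope : Filter.Tendsto (slope ψ 0) (nhdsWithin 0 (Ioi 0)) (nhds D) :=
    (hasDerivWithinAt_iff_tendsto_slope' (lt_irrefl 0)).1 hD.hasDerivWithinAt
  obtain ⟨c, hc_slope, hc⟩ :=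
    ((hslope.eventually (eventually_gt_nhds hDpos)).and (Ioo_mem_nhdsGT hθ₀)).exists
  have hψc : 0 < ψ c := pos_of_slope_pos hc.1 hc_slope hψ0
  obtain ⟨x, hx, hψx⟩ := intermediate_value_Ioo' hc.2.le (hψ.mono (Icc_subset_Icc_left hc.1.le))
    ⟨lt_of_le_of_ne hle hθ₀ne, hψc⟩
  exact hne x ⟨hc.1.trans hx.1, hx.2⟩ hψx

section AngleBounds

variable {g : ℝ → ℝ} {θ₀ d k t : ℝ}

lemma add_mul_mem_Ioc_of_antitone (hg : Antitone g) (hg0 : g 0 = 0) (hθ₀ : 0 < θ₀)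
    (hfix : θ₀ + d * g θ₀ = 0) (hk : 0 ≤ k) (hkd : k < d) (ht : t ∈ Icc 0 θ₀) :
    θ₀ + k * g t ∈ Ioc 0 θ₀ := by
  have hgt : g t ≤ 0 := hg0 ▸ hg ht.1
  have hgθ₀t : g θ₀ ≤ g t := hg ht.2
  have hgθ₀ : g θ₀ < 0 := (hg0 ▸ hg hθ₀.le).lt_of_ne fun h => by
    simp only [h, mul_zero, add_zero] at hfix; linarith
  constructor <;> nlinarith

lemma add_mul_mem_Ioo_of_strictAnti (hg : StrictAnti g) (hg0 : g 0 = 0) (hθ₀ : 0 < θ₀)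
    (hfix : θ₀ + d * g θ₀ = 0) (hk : 0 < k) (hkd : k < d) (ht : t ∈ Ioc 0 θ₀) :
    θ₀ + k * g t ∈ Ioo 0 θ₀ := by
  have hgt : g t < 0 := hg0 ▸ hg ht.1
  exact ⟨(add_mul_mem_Ioc_of_antitone hg.antitone hg0 hθ₀ hfix hk.le hkd
    (Ioc_subset_Icc_self ht)).1, by nlinarith⟩

end AngleBounds

noncomputable def mobiusAngle (b θ : ℝ) : ℝ :=
  2 * Real.arctan (Real.sin θ / (b + Real.cos θ)) - θ

section MobiusAngle

variable {b : ℝ}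

lemma exp_mobiusAngle_mul_I (hb : 1 < b) (θ : ℝ) :
    exp (mobiusAngle b θ * I) = (exp (θ * I) + b) / (b * exp (θ * I) + 1) := by
  symm
  -- with `w = e^{iθ} + b` one has `b e^{iθ} + 1 = e^{iθ} conj w`, and `w / conj w = e^{2i arg w}`
  set w : ℂ := exp (θ * I) + b with hw_def
  have hre : w.re = b + Real.cos θ := by simp [hw_def, exp_ofReal_mul_I_re, add_comm]
  have him : w.im = Real.sin θ := by simp [hw_def, exp_ofReal_mul_I_im]
  have hre_pos : 0 < w.re := by rw [hre]; linarith [Real.neg_one_le_cos θ]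
  have hw : w ≠ 0 := fun h => by simp [h] at hre_pos
  have hden : (b : ℂ) * exp (θ * I) + 1 = exp (θ * I) * (starRingEnd ℂ) w := by
    rw [hw_def, map_add, ← exp_conj, conj_ofReal, map_mul, conj_ofReal, conj_I, mul_add,
      ← exp_add]
    simp only [mul_neg, add_neg_cancel, exp_zero]
    ring
  have hpolar := norm_mul_exp_arg_mul_I w
  have hconj : (starRingEnd ℂ) w = ‖w‖ * exp (-(arg w) * I) := by
    conv_lhs => rw [← hpolar]
    rw [map_mul, ← exp_conj, map_mul, conj_ofReal, conj_ofReal, conj_I]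
    ring_nf
  have hnorm : (‖w‖ : ℂ) ≠ 0 := by exact_mod_cast norm_ne_zero_iff.2 hw
  rw [mobiusAngle, ← hre, ← him, ← arg_eq_arctan_of_re_pos hre_pos, hden, hconj]
  nth_rewrite 1 [← hpolar]
  rw [div_eq_iff (by simp [hnorm, exp_ne_zero])]
  calc (‖w‖ : ℂ) * exp (arg w * I)
      = ‖w‖ * exp (((2 * arg w - θ : ℝ) : ℂ) * I + θ * I + -(arg w) * I) := by
        push_cast; ring_nf
    _ = _ := by rw [exp_add, exp_add]; ring

lemma hasDerivAt_mobiusAngle (hb : 1 < b) (θ : ℝ) :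
    HasDerivAt (mobiusAngle b) ((1 - b ^ 2) / (b ^ 2 + 2 * b * Real.cos θ + 1)) θ := by
  have hc : 0 < b + Real.cos θ := by linarith [Real.neg_one_le_cos θ]
  have hq : b * (b + 2 * Real.cos θ) + 1 ≠ 0 := by nlinarith [Real.neg_one_le_cos θ]
  have hs := Real.sin_sq_add_cos_sq θ
  have hu : HasDerivAt (fun x => Real.sin x / (b + Real.cos x))
      ((Real.cos θ * (b + Real.cos θ) - Real.sin θ * (0 + -Real.sin θ)) / (b + Real.cos θ) ^ 2)
      θ :=
    (Real.hasDerivAt_sin θ).div ((hasDerivAt_const θ b).add (Real.hasDerivAt_cos θ)) hc.ne'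
  refine ((hu.arctan.const_mul 2).sub (hasDerivAt_id' θ)).congr_deriv ?_
  field_simp
  linear_combination (2 * b * (b + Real.cos θ)) * hs

lemma strictAnti_mobiusAngle (hb : 1 < b) : StrictAnti (mobiusAngle b) :=
  strictAnti_of_deriv_neg fun θ => by
    rw [(hasDerivAt_mobiusAngle hb θ).deriv]
    exact div_neg_of_neg_of_pos (by nlinarith) (by nlinarith [Real.neg_one_le_cos θ])

@[fun_prop]
lemma continuous_mobiusAngle (hb : 1 < b) : Continuous (mobiusAngle b) :=
  continuous_iff_continuousAt.2 fun θ => (hasDerivAt_mobiusAngle hb θ).continuousAt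

@[simp]
lemma mobiusAngle_zero (b : ℝ) : mobiusAngle b 0 = 0 := by
  simp [mobiusAngle]

lemma fl_exp_mul_I (hb : 1 < b) (μ θ : ℝ) (k : ℕ) :
    fl b (exp (μ * I)) k (exp (θ * I)) = exp (↑(μ + k * mobiusAngle b θ) * I) := by
  rw [fl, ← exp_mobiusAngle_mul_I hb, ← exp_nat_mul, ← exp_add]
  push_cast
  ring_nf

lemma add_mul_mobiusAngle_eq_zero {d θ₀ : ℝ} (hb : 1 < b) (hd : 0 ≤ d)
    (hbd : d * (b - 1) < b + 1) (hθ₀ : 0 < θ₀) (hπ : θ₀ < Real.pi)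
    (hfix : exp (↑(θ₀ + d * mobiusAngle b θ₀) * I) = 1)
    (hmin : ∀ θ ∈ Ioo 0 θ₀, exp (↑(θ + d * mobiusAngle b θ) * I) ≠ 1) :
    θ₀ + d * mobiusAngle b θ₀ = 0 := by
  have hgθ₀ : mobiusAngle b θ₀ < 0 := mobiusAngle_zero b ▸ strictAnti_mobiusAngle hb hθ₀
  have hle : θ₀ + d * mobiusAngle b θ₀ ≤ 0 := by
    obtain ⟨n, hn⟩ := exp_ofReal_mul_I_eq_one_iff.1 hfix
    have hn1 : (n : ℝ) < 1 := by nlinarith [Real.pi_pos]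
    have hn0 : (n : ℝ) ≤ 0 := by
      have : n < 1 := by exact_mod_cast hn1
      exact_mod_cast (by omega : n ≤ 0)
    rw [hn]
    nlinarith [Real.pi_pos]
  have hD : 0 < 1 + d * ((1 - b ^ 2) / (b ^ 2 + 2 * b * Real.cos 0 + 1)) := by
    rw [Real.cos_zero, show (1 - b ^ 2) / (b ^ 2 + 2 * b * 1 + 1) = (1 - b) / (b + 1) by
      field_simp; ring]
    rw [mul_div_assoc', one_add_div (by linarith)]
    exact div_pos (by linarith) (by linarith)
  exact eq_zero_of_forall_ne_zero_of_hasDerivAt_pos (ψ := fun θ => θ + d * mobiusAngle b θ)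
    (by fun_prop (disch := assumption)) (by simp)
    ((hasDerivAt_id' 0).add ((hasDerivAt_mobiusAngle hb 0).const_mul d)) hD hθ₀ hle
    fun θ hθ h => hmin θ hθ (by simp only [h, ofReal_zero, zero_mul, exp_zero])

end MobiusAngle

lemma openArc_one_exp {θ₀ : ℝ} (h0 : 0 ≤ θ₀) (hπ : θ₀ ≤ Real.pi) :
    openArc 1 (exp (θ₀ * I)) = (fun t : ℝ => exp (t * I)) '' Ioo 0 θ₀ := by
  have harg : arcAngle 1 (exp (θ₀ * I)) = θ₀ := by
    rw [arcAngle, div_one, exp_mul_I, arg_cos_add_sin_mul_I ⟨by linarith [Real.pi_pos], hπ⟩,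
      if_neg h0.not_gt]
  ext z
  simp only [openArc, harg, one_mul, mem_image, mem_Ioo]
  constructor
  · rintro ⟨t, ht0, htθ, rfl⟩
    exact ⟨t, ⟨ht0, htθ⟩, rfl⟩
  · rintro ⟨t, ⟨ht0, htθ⟩, rfl⟩
    exact ⟨t, ht0, htθ, rfl⟩

theorem stmt16_general (d : ℕ) (b : ℝ) (hb1 : 1 < b)
    (hb2 : b < ((d : ℝ) + 1) / ((d : ℝ) - 1))
    (θ₀ : ℝ) (hθ₀pos : 0 < θ₀) (hθ₀pi : θ₀ < Real.pi) (lam0 : ℂ)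
    (hl0 : lam0 = Complex.exp (θ₀ * Complex.I))
    (hl0fix : fl b lam0 d lam0 = 1)
    (hl0min : ∀ θ : ℝ, 0 < θ → θ < θ₀ →
      fl b (Complex.exp (θ * Complex.I)) d (Complex.exp (θ * Complex.I)) ≠ 1) :
    ∀ k : ℕ, 1 ≤ k → k ≤ d - 1 →
      closure ((fun z => fl b lam0 1 (fl b lam0 k z)) '' openArc 1 lam0) ⊆
        openArc 1 lam0 ∧
      fl b lam0 k lam0 ∈ openArc 1 lam0 := by
  intro k hk1 hkd
  subst hl0
  have hk : (1 : ℝ) ≤ k := by exact_mod_cast hk1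
  have hkd' : (k : ℝ) + 1 ≤ d := by exact_mod_cast (by omega : k + 1 ≤ d)
  have hfix : θ₀ + d * mobiusAngle b θ₀ = 0 := by
    refine add_mul_mobiusAngle_eq_zero hb1 d.cast_nonneg ?_ hθ₀pos hθ₀pi ?_ ?_
    · rw [lt_div_iff₀ (by linarith)] at hb2
      linarith
    · rwa [fl_exp_mul_I hb1] at hl0fix
    · exact fun θ hθ => by simpa only [fl_exp_mul_I hb1] using hl0min θ hθ.1 hθ.2
  have hg := strictAnti_mobiusAngle hb1
  have hangle (t : ℝ) (ht : t ∈ Icc 0 θ₀) :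
      θ₀ + mobiusAngle b (θ₀ + k * mobiusAngle b t) ∈ Ioo 0 θ₀ := by
    simpa only [one_mul] using
      add_mul_mem_Ioo_of_strictAnti hg (mobiusAngle_zero b) hθ₀pos hfix one_pos (by linarith)
        (add_mul_mem_Ioc_of_antitone hg.antitone (mobiusAngle_zero b) hθ₀pos hfix (by linarith)
          (by linarith) ht)
  have hcomp (t : ℝ) : fl b (exp (θ₀ * I)) 1 (fl b (exp (θ₀ * I)) k (exp (t * I))) =
      exp (↑(θ₀ + mobiusAngle b (θ₀ + k * mobiusAngle b t)) * I) := by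
    rw [fl_exp_mul_I hb1, fl_exp_mul_I hb1, Nat.cast_one, one_mul]
  have hK : IsCompact ((fun t : ℝ =>
      exp (↑(θ₀ + mobiusAngle b (θ₀ + k * mobiusAngle b t)) * I)) '' Icc 0 θ₀) :=
    isCompact_Icc.image (by fun_prop (disch := assumption))
  rw [openArc_one_exp hθ₀pos.le hθ₀pi.le]
  refine ⟨(closure_minimal ?_ hK.isClosed).trans ?_, ?_⟩
  · rintro _ ⟨_, ⟨t, ht, rfl⟩, rfl⟩
    exact ⟨t, Ioo_subset_Icc_self ht, (hcomp t).symm⟩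
  · rintro _ ⟨t, ht, rfl⟩
    exact ⟨_, hangle t ht, rfl⟩
  · exact ⟨_, add_mul_mem_Ioo_of_strictAnti hg (mobiusAngle_zero b) hθ₀pos hfix (by linarith)
      (by linarith) ⟨hθ₀pos, le_rfl⟩, (fl_exp_mul_I hb1 θ₀ θ₀ k).symm⟩

/-- Let `d ≥ 2` and `1 < b < (d+1)/(d−1)`, and let `λ₀` be as in the paper.  Then for
every `k ∈ {1,…,d−1}` the closure of `(f_{λ₀,1} ∘ f_{λ₀,k})(Arc(1,λ₀))` is contained
in the open arc `Arc(1,λ₀)`; in particular `f_{λ₀,k}(λ₀) ∈ Arc(1,λ₀)`. -/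
theorem stmt16 (d : ℕ) (hd : 2 ≤ d) (b : ℝ) (hb1 : 1 < b)
    (hb2 : b < ((d : ℝ) + 1) / ((d : ℝ) - 1))
    (θ₀ : ℝ) (hθ₀pos : 0 < θ₀) (hθ₀pi : θ₀ < Real.pi) (lam0 : ℂ)
    (hl0 : lam0 = Complex.exp (θ₀ * Complex.I))
    (hl0fix : fl b lam0 d lam0 = 1)
    (hl0min : ∀ θ : ℝ, 0 < θ → θ < θ₀ →
      fl b (Complex.exp (θ * Complex.I)) d (Complex.exp (θ * Complex.I)) ≠ 1) :
    ∀ k : ℕ, 1 ≤ k → k ≤ d - 1 →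
      closure ((fun z => fl b lam0 1 (fl b lam0 k z)) '' openArc 1 lam0) ⊆
        openArc 1 lam0 ∧
      fl b lam0 k lam0 ∈ openArc 1 lam0 :=
  stmt16_general d b hb1 hb2 θ₀ hθ₀pos hθ₀pi lam0 hl0 hl0fix hl0min
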